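/- Let U ⊂ ℂ be open and connected, let g : U → ℂ be holomorphic and injective. Then the Schwarzian derivative S(g) = g'''/g' - (3/2)(g''/g')² is well defined (g' is nowhere zero on U), and S(g) ≡ 0 on U if and only if g is the restriction to U of a Möbius transformation z ↦ (az+b)/(cz+d) with ad - bc ≠ 0. -/

import Mathlib

open Complex Filter Topology Set

section helpers

/-- A differentiable function with zero derivative on an open preconnected set is constant. -/
lemma eqOn_const_of_deriv_zero {U : Set ℂ} (hU : IsOpen U) (hUc : IsPreconnected U)
    {f : ℂ → ℂ} (hf : AnalyticOnNhd ℂ f U) (h0 : ∀ z ∈ U, deriv f z = 0)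
    {z₀ : ℂ} (hz₀ : z₀ ∈ U) : ∀ z ∈ U, f z = f z₀ := by
  have key : EqOn f (fun _ => f z₀) U := by
    apply hf.eqOn_of_preconnected_of_eventuallyEq (analyticOnNhd_const) hUc hz₀
    obtain ⟨r, hr, hball⟩ := Metric.isOpen_iff.mp hU z₀ hz₀
    filter_upwards [Metric.ball_mem_nhds z₀ hr] with w hw
    have hconv : Convex ℝ (Metric.ball z₀ r) := convex_ball z₀ r
    apply hconv.is_const_of_fderivWithin_eq_zero
      (fun y hy => ((hf y (hball hy)).differentiableAt).differentiableWithinAt)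
      _ hw (Metric.mem_ball_self hr)
    intro z hz
    rw [fderivWithin_of_isOpen Metric.isOpen_ball hz]
    have : HasFDerivAt f ((1:ℂ →L[ℂ] ℂ).smulRight 0) z :=
      ((hf z (hball hz)).differentiableAt.hasDerivAt.congr_deriv (h0 z (hball hz))).hasFDerivAt
    rw [this.fderiv]; ext; simp
  exact fun z hz => key hz

lemma eventually_zero_of_ode {h : ℂ → ℂ} {z₁ : ℂ} (han : AnalyticAt ℂ h z₁)
    (hode : ∀ᶠ z in 𝓝 z₁, HasDerivAt h (h z ^ 2 / 2) z) (h0 : h z₁ = 0) :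
    ∀ᶠ z in 𝓝 z₁, h z = 0 := by
  by_contra hne
  have horder : analyticOrderAt h z₁ ≠ ⊤ := fun htop => hne (analyticOrderAt_eq_top.mp htop)
  obtain ⟨n, hn⟩ := WithTop.ne_top_iff_exists.mp horder
  obtain ⟨u, hu_an, hu_ne, heq⟩ := (han.analyticOrderAt_eq_natCast (n := n)).mp hn.symm
  have hn0 : n ≠ 0 := by
    rintro rfl
    have : h z₁ = u z₁ := by simpa using heq.self_of_nhds
    exact hu_ne (this.symm.trans h0)
  obtain ⟨m, rfl⟩ := Nat.exists_eq_succ_of_ne_zero hn0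
  obtain ⟨O, hOsub, hOopen, hzO⟩ := mem_nhds_iff.mp
    (heq.and (hode.and hu_an.eventually_analyticAt))
  have key : ∀ z ∈ O, z ≠ z₁ →
      ((m:ℂ)+1) * u z + (z - z₁) * deriv u z = (z - z₁)^(m+2) * (u z)^2 / 2 := by
    intro z hz hzne
    obtain ⟨hheq, hhode, hu_an_z⟩ := hOsub hz
    have hev : h =ᶠ[𝓝 z] fun w => (w - z₁)^(m+1) * u w := by
      filter_upwards [hOopen.mem_nhds hz] with w hw
      simpa [smul_eq_mul] using (hOsub hw).1
    have hprod : HasDerivAt (fun w => (w - z₁)^(m+1) * u w)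
        (((m:ℂ)+1) * (z - z₁)^m * u z + (z - z₁)^(m+1) * deriv u z) z := by
      have h1 : HasDerivAt (fun w : ℂ => (w - z₁)^(m+1)) (((m:ℂ)+1) * (z - z₁)^m) z := by
        have := (HasDerivAt.fun_pow ((hasDerivAt_id z).sub_const z₁) (m+1))
        simpa using this.congr_deriv (by push_cast; simp only [id_eq]; ring)
      exact (h1.mul hu_an_z.differentiableAt.hasDerivAt).congr_deriv (by ring)
    have hd : ((z - z₁)^(m+1) * u z)^2/2
        = ((m:ℂ)+1) * (z - z₁)^m * u z + (z - z₁)^(m+1) * deriv u z := by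
      have h1 : deriv h z = ((m:ℂ)+1) * (z - z₁)^m * u z + (z - z₁)^(m+1) * deriv u z := by
        rw [hev.deriv_eq]; exact hprod.deriv
      have h2 : deriv h z = (h z)^2/2 := hhode.deriv
      have hz2 : h z = (z - z₁)^(m+1) * u z := by simpa [smul_eq_mul] using hheq
      rw [h2, hz2] at h1; exact h1
    have hzz : (z - z₁) ≠ 0 := sub_ne_zero.mpr hzne
    have hpow : (z - z₁)^m ≠ 0 := pow_ne_zero _ hzz
    apply mul_left_cancel₀ hpow
    linear_combination -hd
  have hduc : ContinuousAt (deriv u) z₁ := by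
    obtain ⟨s, hsub, hso, hz⟩ := mem_nhds_iff.mp hu_an.eventually_analyticAt
    exact ((AnalyticOnNhd.deriv (fun w hw => hsub hw)) z₁ hz).continuousAt
  have hF : ContinuousAt (fun z => ((m:ℂ)+1) * u z + (z - z₁) * deriv u z) z₁ :=
    (continuousAt_const.mul hu_an.continuousAt).add
      ((continuousAt_id.sub continuousAt_const).mul hduc)
  have hG : ContinuousAt (fun z => (z - z₁)^(m+2) * (u z)^2 / 2) z₁ :=
    (((continuousAt_id.sub continuousAt_const).pow _).mul (hu_an.continuousAt.pow 2)).div_const 2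
  have hFlim : Tendsto (fun z => ((m:ℂ)+1) * u z + (z - z₁) * deriv u z) (𝓝[≠] z₁)
      (𝓝 (((m:ℂ)+1) * u z₁)) := by
    have := (hF.continuousWithinAt (s := {z₁}ᶜ)).tendsto
    simpa using this
  have hGlim : Tendsto (fun z => (z - z₁)^(m+2) * (u z)^2 / 2) (𝓝[≠] z₁) (𝓝 0) := by
    have := (hG.continuousWithinAt (s := {z₁}ᶜ)).tendsto
    simpa using this
  have heqlim : ((m:ℂ)+1) * u z₁ = 0 := by
    have heqev : (fun z => ((m:ℂ)+1) * u z + (z - z₁) * deriv u z)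
        =ᶠ[𝓝[≠] z₁] (fun z => (z - z₁)^(m+2) * (u z)^2 / 2) := by
      filter_upwards [self_mem_nhdsWithin, nhdsWithin_le_nhds (hOopen.mem_nhds hzO)] with z hz1 hz2
      exact key z hz2 hz1
    exact tendsto_nhds_unique (hFlim.congr' heqev) hGlim
  have hm : ((m:ℂ)+1) ≠ 0 := by exact_mod_cast Nat.succ_ne_zero m
  exact hu_ne (by simpa [hm] using heqlim)

lemma deriv_ne_zero_of_injOn {U : Set ℂ} (hU : IsOpen U) {g : ℂ → ℂ}
    (hg : DifferentiableOn ℂ g U) (hginj : Set.InjOn g U) {z₀ : ℂ} (hz₀ : z₀ ∈ U) :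
    deriv g z₀ ≠ 0 := by
  intro hd0
  have hgan : AnalyticOnNhd ℂ g U := hg.analyticOnNhd hU
  set f : ℂ → ℂ := fun z => g z - g z₀ with hf_def
  have hfan : AnalyticAt ℂ f z₀ := (hgan z₀ hz₀).sub analyticAt_const
  -- f is not eventually zero
  have hne : ¬ (∀ᶠ z in 𝓝 z₀, f z = 0) := by
    intro hev
    obtain ⟨r, hr, hball⟩ := Metric.mem_nhds_iff.mp (Filter.inter_mem hev (hU.mem_nhds hz₀))
    have h1 : z₀ + r/2 ∈ Metric.ball z₀ r := by
      simp only [Metric.mem_ball, Complex.dist_eq, add_sub_cancel_left]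
      rw [norm_div, Complex.norm_real, Complex.norm_two, Real.norm_eq_abs, abs_of_pos hr]
      linarith
    have h2 : z₀ ∈ Metric.ball z₀ r := Metric.mem_ball_self hr
    have e1 := (hball h1).1
    have e2 := (hball h2).1
    have : g (z₀ + r/2) = g z₀ := by
      have h3 : g (z₀ + r/2) - g z₀ = 0 := e1
      exact sub_eq_zero.mp h3
    have := hginj (hball h1).2 (hball h2).2 this
    simp at this
    exact hr.ne' this
  have horder : analyticOrderAt f z₀ ≠ ⊤ := fun htop => hne (analyticOrderAt_eq_top.mp htop)
  obtain ⟨n, hn⟩ := WithTop.ne_top_iff_exists.mp horder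
  obtain ⟨u, hu_an, hu_ne, heq⟩ := (hfan.analyticOrderAt_eq_natCast (n := n)).mp hn.symm
  -- n ≥ 2
  have hn0 : n ≠ 0 := by
    rintro rfl
    have : f z₀ = u z₀ := by simpa using heq.self_of_nhds
    simp [hf_def] at this
    exact hu_ne this.symm
  have hn1 : n ≠ 1 := by
    rintro rfl
    -- then deriv f z₀ = u z₀ ≠ 0, but deriv f z₀ = deriv g z₀ = 0
    have hev : f =ᶠ[𝓝 z₀] fun w => (w - z₀) * u w := by
      filter_upwards [heq] with w hw; simpa using hw
    have hprod : HasDerivAt (fun w => (w - z₀) * u w) (1 * u z₀ + (z₀ - z₀) * deriv u z₀) z₀ :=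
      (((hasDerivAt_id z₀).sub_const z₀).congr_deriv (by simp)).mul
        hu_an.differentiableAt.hasDerivAt
    have h1 : deriv f z₀ = u z₀ := by
      rw [hev.deriv_eq, hprod.deriv]; ring
    have h2 : deriv f z₀ = deriv g z₀ := by
      show deriv (fun z => g z - g z₀) z₀ = deriv g z₀
      rw [deriv_sub_const]
    rw [h2, hd0] at h1
    exact hu_ne h1.symm
  have hn2 : 2 ≤ n := by omega
  -- construct the n-th root of u near z₀
  set c : ℂ := u z₀ with hc_def
  set d : ℂ := Complex.exp (Complex.log c / n) with hd_def
  have hdn : d ^ n = c := by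
    rw [hd_def, ← Complex.exp_nat_mul, mul_div_cancel₀ _ (by exact_mod_cast hn0 : (n:ℂ) ≠ 0)]
    exact Complex.exp_log hu_ne
  have hdne : d ≠ 0 := Complex.exp_ne_zero _
  set r : ℂ → ℂ := fun z => d * Complex.exp (Complex.log (u z / c) / n) with hr_def
  have hran : AnalyticAt ℂ r z₀ := by
    apply analyticAt_const.mul
    apply AnalyticAt.cexp
    apply AnalyticAt.div
    · apply AnalyticAt.clog (hu_an.div analyticAt_const hu_ne)
      rw [show ((u / fun _ => c : ℂ → ℂ)) z₀ = 1 from div_self hu_ne]; simp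
    · exact analyticAt_const
    · exact_mod_cast hn0
  have hrz₀ : r z₀ = d := by
    simp [hr_def, hc_def, div_self hu_ne]
  have hrpow : ∀ᶠ z in 𝓝 z₀, r z ^ n = u z := by
    have hucont : ∀ᶠ z in 𝓝 z₀, u z ≠ 0 := hu_an.continuousAt.eventually_ne hu_ne
    filter_upwards [hucont] with z hz
    calc r z ^ n = d^n * (Complex.exp (Complex.log (u z / c)/n))^n := by rw [hr_def]; ring
      _ = c * (u z / c) := by
          rw [hdn, ← Complex.exp_nat_mul,
            mul_div_cancel₀ _ (by exact_mod_cast hn0 : (n:ℂ) ≠ 0),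
            Complex.exp_log (div_ne_zero hz hu_ne)]
      _ = u z := by field_simp
  -- φ = (z - z₀) * r z
  set φ : ℂ → ℂ := fun z => (z - z₀) * r z with hφ_def
  have hφz₀ : φ z₀ = 0 := by simp [hφ_def]
  have hfφ : ∀ᶠ z in 𝓝 z₀, f z = φ z ^ n := by
    filter_upwards [heq, hrpow] with z h1 h2
    rw [hφ_def]; simp only [mul_pow, h2]
    simpa using h1
  have hφan : AnalyticAt ℂ φ z₀ := ((analyticAt_id.sub analyticAt_const)).mul hran
  have hφd : HasDerivAt φ d z₀ := by
    have := (((hasDerivAt_id z₀).sub_const z₀).mul hran.differentiableAt.hasDerivAt)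
    simpa [hrz₀] using (show HasDerivAt φ _ z₀ from this)
  have hφstrict : HasStrictDerivAt φ d z₀ := by
    have h1 := (hφan.contDiffAt (n := 1)).hasStrictDerivAt one_ne_zero
    rwa [hφd.deriv] at h1
  -- local inverse
  have hri : ∀ᶠ y in 𝓝 (0:ℂ), φ ((hφstrict.hasStrictFDerivAt_equiv hdne).localInverse φ _ _ y) = y := by
    have := (hφstrict.hasStrictFDerivAt_equiv hdne).eventually_right_inverse
    rwa [hφz₀] at this
  have htend : Tendsto ((hφstrict.hasStrictFDerivAt_equiv hdne).localInverse φ _ _) (𝓝 0) (𝓝 z₀) := by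
    have := (hφstrict.hasStrictFDerivAt_equiv hdne).localInverse_tendsto
    rwa [hφz₀] at this
  set ψ := (hφstrict.hasStrictFDerivAt_equiv hdne).localInverse φ _ _ with hψ_def
  have hBmem : {z | f z = φ z ^ n} ∩ U ∈ 𝓝 z₀ := Filter.inter_mem hfφ (hU.mem_nhds hz₀)
  have hall : ∀ᶠ y in 𝓝 (0:ℂ), φ (ψ y) = y ∧ ψ y ∈ {z | f z = φ z ^ n} ∩ U :=
    hri.and (htend.eventually_mem hBmem)
  obtain ⟨δ, hδ, hδball⟩ := Metric.eventually_nhds_iff_ball.mp hall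
  -- root of unity
  have hζprim : IsPrimitiveRoot (Complex.exp (2 * Real.pi * Complex.I / n)) n :=
    Complex.isPrimitiveRoot_exp n hn0
  set ζ := Complex.exp (2 * Real.pi * Complex.I / n) with hζ_def
  have hζn : ζ ^ n = 1 := hζprim.pow_eq_one
  have hζ1 : ζ ≠ 1 := by
    intro h
    have : n ∣ 1 := hζprim.dvd_of_pow_eq_one 1 (by rw [pow_one, h])
    have := Nat.dvd_one.mp this
    omega
  have hζabs : ‖ζ‖ = 1 := by
    have h1 : ‖ζ‖ ^ n = 1 := by
      rw [← norm_pow, hζn, norm_one]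
    have h2 : (0:ℝ) ≤ ‖ζ‖ := norm_nonneg _
    exact (pow_left_inj₀ h2 zero_le_one hn0).mp (by rw [h1, one_pow])
  -- pick y
  set y : ℂ := ((δ/2 : ℝ) : ℂ) with hy_def
  have hyne : y ≠ 0 := by
    simp [hy_def]
    positivity
  have hymem : y ∈ Metric.ball (0:ℂ) δ := by
    simp only [Metric.mem_ball, dist_zero_right, hy_def, Complex.norm_real,
      Real.norm_eq_abs]
    rw [abs_of_pos (by positivity)]
    linarith
  have hζymem : ζ * y ∈ Metric.ball (0:ℂ) δ := by
    simp only [Metric.mem_ball, dist_zero_right, norm_mul, hζabs, one_mul]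
    simpa [Metric.mem_ball, Complex.dist_eq] using hymem
  obtain ⟨hy1, hy2, hy3⟩ := hδball _ hymem
  obtain ⟨hz1, hz2, hz3⟩ := hδball _ hζymem
  -- the contradiction
  have hgval : g (ψ y) = g (ψ (ζ * y)) := by
    have e1 : f (ψ y) = y ^ n := by rw [hy2, hy1]
    have e2 : f (ψ (ζ * y)) = y ^ n := by
      rw [hz2, hz1, mul_pow, hζn, one_mul]
    have : f (ψ y) = f (ψ (ζ * y)) := by rw [e1, e2]
    have h4 : g (ψ y) - g z₀ = g (ψ (ζ * y)) - g z₀ := this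
    linear_combination h4
  have heqpts : ψ y = ψ (ζ * y) := hginj hy3 hz3 hgval
  have : y = ζ * y := by
    conv_lhs => rw [← hy1]
    rw [heqpts, hz1]
  have : (ζ - 1) * y = 0 := by ring_nf; linear_combination -this
  rcases mul_eq_zero.mp this with h | h
  · exact hζ1 (by linear_combination h)
  · exact hyne h

end helpers


/-- The Schwarzian derivative `S(g) = g'''/g' - (3/2)(g''/g')²`. -/
noncomputable def schwarzian (g : ℂ → ℂ) (z : ℂ) : ℂ :=
  iteratedDeriv 3 g z / deriv g z - (3 / 2) * (iteratedDeriv 2 g z / deriv g z) ^ 2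

/-- For an injective holomorphic function `g` on an open connected set `U`, the derivative
of `g` never vanishes (so the Schwarzian is well defined), and the Schwarzian vanishes
identically on `U` iff `g` is the restriction of a Möbius transformation. -/
theorem schwarzian_zero_iff_moebius (U : Set ℂ) (hU : IsOpen U) (hUconn : IsConnected U)
    (g : ℂ → ℂ) (hg : DifferentiableOn ℂ g U) (hginj : Set.InjOn g U) :
    (∀ z ∈ U, deriv g z ≠ 0) ∧
    ((∀ z ∈ U, schwarzian g z = 0) ↔
      ∃ a b c d : ℂ, a * d - b * c ≠ 0 ∧
        ∀ z ∈ U, g z = (a * z + b) / (c * z + d)) := by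
  have hd' : ∀ z ∈ U, deriv g z ≠ 0 := fun z hz => deriv_ne_zero_of_injOn hU hg hginj hz
  have hgan : AnalyticOnNhd ℂ g U := hg.analyticOnNhd hU
  have hg1an : AnalyticOnNhd ℂ (deriv g) U := hgan.deriv
  have hg2an : AnalyticOnNhd ℂ (deriv (deriv g)) U := hg1an.deriv
  have hg3an : AnalyticOnNhd ℂ (deriv (deriv (deriv g))) U := hg2an.deriv
  have hit2 : iteratedDeriv 2 g = deriv (deriv g) := by
    rw [show (2:ℕ) = 1+1 from rfl, iteratedDeriv_succ, iteratedDeriv_one]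
  have hit3 : iteratedDeriv 3 g = deriv (deriv (deriv g)) := by
    rw [show (3:ℕ) = 2+1 from rfl, iteratedDeriv_succ, hit2]
  obtain ⟨w₀, hw₀⟩ := hUconn.nonempty
  refine ⟨hd', ?_, ?_⟩
  · -- forward direction
    intro hS
    have key : ∀ z ∈ U, 2 * (deriv (deriv (deriv g)) z * deriv g z)
        = 3 * (deriv (deriv g) z)^2 := by
      intro z hz
      have h0 := hS z hz
      rw [schwarzian, hit2, hit3] at h0
      rw [sub_eq_zero] at h0
      have hne := hd' z hz
      field_simp at h0
      apply mul_left_cancel₀ hne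
      linear_combination (deriv g z) * h0
    set h : ℂ → ℂ := fun z => deriv (deriv g) z / deriv g z with h_def
    have han : AnalyticOnNhd ℂ h U := fun z hz => (hg2an z hz).div (hg1an z hz) (hd' z hz)
    have hode : ∀ z ∈ U, HasDerivAt h (h z ^ 2 / 2) z := by
      intro z hz
      have h1 : HasDerivAt (deriv g) (deriv (deriv g) z) z :=
        (hg1an z hz).differentiableAt.hasDerivAt
      have h2 : HasDerivAt (deriv (deriv g)) (deriv (deriv (deriv g)) z) z :=
        (hg2an z hz).differentiableAt.hasDerivAt
      apply (h2.div h1 (hd' z hz)).congr_deriv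
      have hne := hd' z hz
      rw [h_def]
      field_simp
      linear_combination key z hz
    by_cases hA : ∃ z₁ ∈ U, deriv (deriv g) z₁ = 0
    · -- g'' vanishes somewhere, hence everywhere: g is affine
      obtain ⟨z₁, hz₁, hz₁0⟩ := hA
      have hev : ∀ᶠ z in 𝓝 z₁, h z = 0 := by
        apply eventually_zero_of_ode (han z₁ hz₁)
        · filter_upwards [hU.mem_nhds hz₁] with z hz using hode z hz
        · rw [h_def]; simp [hz₁0]
      have hzero : ∀ z ∈ U, deriv (deriv g) z = 0 := by
        have := han.eqOn_zero_of_preconnected_of_eventuallyEq_zero hUconn.isPreconnected hz₁ hev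
        intro z hz
        have h1 : h z = 0 := this hz
        rw [h_def] at h1
        exact (div_eq_zero_iff.mp h1).resolve_right (hd' z hz)
      have hconst := eqOn_const_of_deriv_zero hU hUconn.isPreconnected hg1an hzero hw₀
      set A := deriv g w₀ with hA_def
      set q : ℂ → ℂ := fun z => g z - A * z with hq_def
      have hqan : AnalyticOnNhd ℂ q U := fun z hz =>
        (hgan z hz).sub (analyticAt_const.mul analyticAt_id)
      have hqd : ∀ z ∈ U, deriv q z = 0 := by
        intro z hz
        have h1 : HasDerivAt q (deriv g z - A * 1) z :=
          (hgan z hz).differentiableAt.hasDerivAt.sub ((hasDerivAt_id z).const_mul A)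
        rw [h1.deriv, hconst z hz]
        ring
      have hqconst := eqOn_const_of_deriv_zero hU hUconn.isPreconnected hqan hqd hw₀
      refine ⟨A, q w₀, 0, 1, by simpa using hd' w₀ hw₀, ?_⟩
      intro z hz
      have := hqconst z hz
      rw [hq_def] at this
      simp only [zero_mul, zero_add, div_one]
      linear_combination this
    · -- g'' never vanishes: genuine Möbius case
      push_neg at hA
      set w : ℂ → ℂ := fun z => deriv g z / deriv (deriv g) z with w_def
      have hwan : AnalyticOnNhd ℂ (fun z => w z + z/2) U := fun z hz =>
        ((hg1an z hz).div (hg2an z hz) (hA z hz)).add (analyticAt_id.div analyticAt_const two_ne_zero)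
      have hwd : ∀ z ∈ U, deriv (fun z => w z + z/2) z = 0 := by
        intro z hz
        have h1 : HasDerivAt (deriv g) (deriv (deriv g) z) z :=
          (hg1an z hz).differentiableAt.hasDerivAt
        have h2 : HasDerivAt (deriv (deriv g)) (deriv (deriv (deriv g)) z) z :=
          (hg2an z hz).differentiableAt.hasDerivAt
        have h3 : HasDerivAt w ((deriv (deriv g) z * deriv (deriv g) z
            - deriv g z * deriv (deriv (deriv g)) z) / (deriv (deriv g) z)^2) z :=
          h1.div h2 (hA z hz)
        have h4 : HasDerivAt (fun z : ℂ => z/2) (1/2 : ℂ) z := by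
          simpa using (hasDerivAt_id z).div_const 2
        have h5 := h3.add h4
        rw [show deriv (fun z => w z + z/2) z = _ from h5.deriv]
        have hne2 := hA z hz
        have hne1 := hd' z hz
        field_simp
        linear_combination -key z hz
      have hwconst := eqOn_const_of_deriv_zero hU hUconn.isPreconnected hwan hwd hw₀
      set cc : ℂ := w w₀ + w₀/2 with hcc_def
      set z₂ : ℂ := 2 * cc with hz₂_def
      have hwz : ∀ z ∈ U, 2 * deriv g z = (z₂ - z) * deriv (deriv g) z := by
        intro z hz
        have h1 := hwconst z hz
        rw [w_def] at h1
        have hne2 := hA z hz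
        field_simp at h1
        linear_combination h1
      have hz₂ne : ∀ z ∈ U, z ≠ z₂ := by
        intro z hz hzz
        have h5 := hwz z hz
        rw [hzz] at h5
        simp at h5
        exact hd' z hz (by rw [hzz]; exact h5)
      -- φ = g' * (z - z₂)² is constant = K
      set φ : ℂ → ℂ := fun z => deriv g z * (z - z₂)^2 with hφ_def
      have hφan : AnalyticOnNhd ℂ φ U := fun z hz =>
        (hg1an z hz).mul ((analyticAt_id.sub analyticAt_const).pow 2)
      have hφd : ∀ z ∈ U, deriv φ z = 0 := by
        intro z hz
        have h1 : HasDerivAt (fun z : ℂ => (z - z₂)^2) (2*(z - z₂)) z := by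
          simpa using (HasDerivAt.fun_pow ((hasDerivAt_id z).sub_const z₂) 2)
        have h2 := ((hg1an z hz).differentiableAt.hasDerivAt).mul h1
        rw [show deriv φ z = _ from h2.deriv]
        linear_combination (z - z₂) * hwz z hz
      have hφconst := eqOn_const_of_deriv_zero hU hUconn.isPreconnected hφan hφd hw₀
      set K : ℂ := deriv g w₀ * (w₀ - z₂)^2 with hK_def
      have hKne : K ≠ 0 :=
        mul_ne_zero (hd' w₀ hw₀) (pow_ne_zero 2 (sub_ne_zero.mpr (hz₂ne w₀ hw₀)))
      -- ψ = g + K/(z - z₂) is constant = L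
      set ψ : ℂ → ℂ := fun z => g z + K / (z - z₂) with hψ_def
      have hψan : AnalyticOnNhd ℂ ψ U := fun z hz =>
        (hgan z hz).add (analyticAt_const.div (analyticAt_id.sub analyticAt_const)
          (sub_ne_zero.mpr (hz₂ne z hz)))
      have hψd : ∀ z ∈ U, deriv ψ z = 0 := by
        intro z hz
        have hne : z - z₂ ≠ 0 := sub_ne_zero.mpr (hz₂ne z hz)
        have h1 : HasDerivAt (fun z : ℂ => K / (z - z₂)) ((0 * (z - z₂) - K * 1)/(z - z₂)^2) z :=
          (hasDerivAt_const z K).div ((hasDerivAt_id z).sub_const z₂) hne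
        have h2 := ((hgan z hz).differentiableAt.hasDerivAt).add h1
        rw [show deriv ψ z = _ from h2.deriv]
        have h3 : deriv g z * (z - z₂)^2 = K := hφconst z hz
        field_simp
        linear_combination h3
      have hψconst := eqOn_const_of_deriv_zero hU hUconn.isPreconnected hψan hψd hw₀
      set L : ℂ := g w₀ + K / (w₀ - z₂) with hL_def
      refine ⟨L, -(L*z₂) - K, 1, -z₂, ?_, ?_⟩
      · intro hcontra
        exact hKne (by linear_combination hcontra)
      intro z hz
      have h1 : g z + K / (z - z₂) = L := hψconst z hz
      have hne : z - z₂ ≠ 0 := sub_ne_zero.mpr (hz₂ne z hz)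
      have hne' : (1:ℂ)*z + -z₂ ≠ 0 := by rw [one_mul, ← sub_eq_add_neg]; exact hne
      rw [eq_div_iff hne']
      field_simp at h1
      linear_combination h1
  · -- reverse direction
    rintro ⟨a, b, c, d, hdet, heq⟩
    have hden : ∀ x ∈ U, c*x + d ≠ 0 := by
      intro x hx h0
      have hc : c ≠ 0 := by
        rintro rfl
        rw [zero_mul, zero_add] at h0
        exact hdet (by rw [h0]; ring)
      have hnum : a*x + b ≠ 0 := by
        intro h1
        apply hdet
        have hd2 : d = -(c*x) := by linear_combination h0
        have hb2 : b = -(a*x) := by linear_combination h1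
        rw [hd2, hb2]; ring
      have hcont : ContinuousAt g x := (hg.differentiableAt (hU.mem_nhds hx)).continuousAt
      have hlin : Continuous (fun z : ℂ => c*z + d) := by continuity
      have hlim1 : Tendsto (fun z => g z * (c*z + d)) (𝓝[≠] x) (𝓝 (0:ℂ)) := by
        have := (hcont.mul hlin.continuousAt).continuousWithinAt (s := {x}ᶜ)
        rw [ContinuousWithinAt] at this
        simp only [Pi.mul_apply, h0, mul_zero] at this; exact this
      have hlim2 : Tendsto (fun z => a*z + b) (𝓝[≠] x) (𝓝 (a*x + b)) := by
        have : Continuous (fun z : ℂ => a*z + b) := by continuity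
        exact this.continuousAt.continuousWithinAt
      have hev : (fun z => g z * (c*z+d)) =ᶠ[𝓝[≠] x] (fun z => a*z+b) := by
        filter_upwards [self_mem_nhdsWithin, nhdsWithin_le_nhds (hU.mem_nhds hx)] with z hz1 hz2
        have hzx : z ≠ x := hz1
        have hden2 : c*z + d ≠ 0 := by
          intro h2
          apply hzx
          have h3 : c * (z - x) = 0 := by linear_combination h2 - h0
          rcases mul_eq_zero.mp h3 with h | h
          · exact absurd h hc
          · exact sub_eq_zero.mp h
        rw [heq z hz2, div_mul_cancel₀ _ hden2]
      have := tendsto_nhds_unique (hlim1.congr' hev) hlim2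
      exact hnum this.symm
    set V : Set ℂ := {x | c*x + d ≠ 0} with hV_def
    have hVopen : IsOpen V := isOpen_ne_fun (by continuity) continuous_const
    have hUV : U ⊆ V := fun x hx => hden x hx
    set M : ℂ → ℂ := fun z => (a*z + b)/(c*z + d) with hM_def
    set N1 : ℂ → ℂ := fun z => (a*d - b*c)/(c*z + d)^2 with hN1_def
    set N2 : ℂ → ℂ := fun z => -2*c*(a*d - b*c)/(c*z + d)^3 with hN2_def
    have hlin : ∀ x : ℂ, HasDerivAt (fun z : ℂ => c*z + d) c x := by
      intro x
      simpa using ((hasDerivAt_id x).const_mul c).add_const d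
    have haff : ∀ x : ℂ, HasDerivAt (fun z : ℂ => a*z + b) a x := by
      intro x
      simpa using ((hasDerivAt_id x).const_mul a).add_const b
    have hM1 : ∀ x ∈ V, HasDerivAt M (N1 x) x := by
      intro x hx
      apply ((haff x).div (hlin x) hx).congr_deriv
      rw [hN1_def]
      have hx' : c*x + d ≠ 0 := hx
      field_simp
      ring
    have hM2 : ∀ x ∈ V, HasDerivAt N1 (N2 x) x := by
      intro x hx
      have hx' : c*x + d ≠ 0 := hx
      have h1 : HasDerivAt (fun z : ℂ => (c*z + d)^2) (2*(c*x+d)*c) x := by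
        simpa using (HasDerivAt.fun_pow (hlin x) 2).congr_deriv (by ring)
      apply ((hasDerivAt_const x (a*d - b*c)).div h1 (pow_ne_zero 2 hx')).congr_deriv
      rw [hN2_def]
      field_simp
      ring
    have hM3 : ∀ x ∈ V, HasDerivAt N2 (6*c^2*(a*d - b*c)/(c*x + d)^4) x := by
      intro x hx
      have hx' : c*x + d ≠ 0 := hx
      have h1 : HasDerivAt (fun z : ℂ => (c*z + d)^3) (3*(c*x+d)^2*c) x := by
        simpa using (HasDerivAt.fun_pow (hlin x) 3).congr_deriv (by ring)
      apply ((hasDerivAt_const x (-2*c*(a*d - b*c))).div h1 (pow_ne_zero 3 hx')).congr_deriv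
      field_simp
      ring
    -- derivatives of g on U
    have hgd1 : ∀ x ∈ U, deriv g x = N1 x := by
      intro x hx
      have hev : g =ᶠ[𝓝 x] M := by
        filter_upwards [hU.mem_nhds hx] with z hz using heq z hz
      rw [hev.deriv_eq, (hM1 x (hUV hx)).deriv]
    have hgd2 : ∀ x ∈ U, deriv (deriv g) x = N2 x := by
      intro x hx
      have hev : deriv g =ᶠ[𝓝 x] N1 := by
        filter_upwards [hU.mem_nhds hx] with z hz using hgd1 z hz
      rw [hev.deriv_eq, (hM2 x (hUV hx)).deriv]
    have hgd3 : ∀ x ∈ U, deriv (deriv (deriv g)) x = 6*c^2*(a*d - b*c)/(c*x + d)^4 := by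
      intro x hx
      have hev : deriv (deriv g) =ᶠ[𝓝 x] N2 := by
        filter_upwards [hU.mem_nhds hx] with z hz using hgd2 z hz
      rw [hev.deriv_eq, (hM3 x (hUV hx)).deriv]
    intro z hz
    rw [schwarzian, hit2, hit3, hgd1 z hz, hgd2 z hz, hgd3 z hz, hN1_def, hN2_def]
    have ht : c*z + d ≠ 0 := hden z hz
    have hee : a*d - b*c ≠ 0 := hdet
    field_simp
    ring
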